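/- arXiv:1902.06722 — 2 statements merged into one kernel-verified Lean document; each statement's English description precedes it below -/
import Mathlib

section
/- Cauchy interlacing / Rayleigh–Ritz inequality: let F be a self-adjoint operator on a finite-dimensional complex inner product space V of dimension n with eigenvalues λ₁ ≤ … ≤ λₙ (with multiplicity). Let W ⊆ V be a subspace of dimension m with orthogonal projection P, and let μ₁ ≤ … ≤ μₘ be the eigenvalues of the compression P∘F∘P restricted to W. Then λₖ ≤ μₖ for all k = 1, …, m. -/
/-!
Choose a nonzero `x` in the span of the eigenvectors `c 0, …, c k` of the compression which is
orthogonal to the eigenvectors `b 0, …, b (k - 1)` of `F`; it exists because `k` linear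
conditions cannot cut a `(k + 1)`-dimensional space down to zero. Expanding `⟪x, F x⟫` in both
eigenbases then gives `λ k * ‖x‖² ≤ ⟪x, F x⟫ = ⟪x, P F P x⟫ ≤ μ k * ‖x‖²`.
-/

open scoped InnerProductSpace
open Module Submodule Finset

section

variable {𝕜 E : Type*} [RCLike 𝕜] [NormedAddCommGroup E] [InnerProductSpace 𝕜 E]

theorem exists_mem_span_image_ne_zero_forall_inner_eq_zero {ι κ : Type*} {v : ι → E}
    (hv : LinearIndependent 𝕜 v) (f : κ → E) {s : Finset ι} {t : Finset κ} (hts : #t < #s) :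
    ∃ x ∈ span 𝕜 (v '' s), x ≠ 0 ∧ ∀ j ∈ t, ⟪f j, x⟫_𝕜 = 0 := by
  rw [Set.image_eq_range]
  set U := span 𝕜 (Set.range fun i : s => v i)
  have : FiniteDimensional 𝕜 U := .span_of_finite 𝕜 (Set.finite_range _)
  let L : U →ₗ[𝕜] t → 𝕜 := LinearMap.pi fun j => (innerₛₗ 𝕜 (f j)).comp U.subtype
  have hU : finrank 𝕜 U = #s :=
    (finrank_span_eq_card (hv.comp _ Subtype.val_injective)).trans (Fintype.card_coe s)
  have hker : LinearMap.ker L ≠ ⊥ := LinearMap.ker_ne_bot_of_finrank_lt <| by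
    rwa [hU, finrank_fintype_fun_eq_card, Fintype.card_coe]
  obtain ⟨⟨x, hxU⟩, hxL, hx0⟩ := exists_mem_ne_zero_of_ne_bot hker
  exact ⟨x, hxU, by simpa using hx0, fun j hj => congr_fun hxL ⟨j, hj⟩⟩

theorem Orthonormal.inner_eq_zero_of_mem_span_image {ι : Type*} {v : ι → E}
    (hv : Orthonormal 𝕜 v) {s : Set ι} {i : ι} (hi : i ∉ s) {x : E}
    (hx : x ∈ span 𝕜 (v '' s)) : ⟪v i, x⟫_𝕜 = 0 := by
  obtain ⟨l, hl, rfl⟩ := (Finsupp.mem_span_image_iff_linearCombination 𝕜).1 hx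
  rw [inner_eq_zero_symm]
  exact hv.inner_finsupp_eq_zero hi hl

namespace OrthonormalBasis

variable {ι : Type*} [Fintype ι] (b : OrthonormalBasis ι 𝕜 E) {T : E →ₗ[𝕜] E} {r : ι → ℝ}

theorem re_inner_map_self_eq_sum (hT : ∀ i, T (b i) = (r i : 𝕜) • b i) (x : E) :
    RCLike.re ⟪x, T x⟫_𝕜 = ∑ i, r i * ‖⟪b i, x⟫_𝕜‖ ^ 2 := by
  have hTx : T x = ∑ i, ((r i : 𝕜) * ⟪b i, x⟫_𝕜) • b i := by
    conv_lhs => rw [← b.sum_repr' x]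
    simp only [map_sum, map_smul, hT, smul_smul, mul_comm]
  rw [hTx, inner_sum, map_sum]
  refine sum_congr rfl fun i _ => ?_
  rw [inner_smul_right, ← inner_conj_symm x (b i), mul_assoc, RCLike.mul_conj]
  norm_cast

theorem le_re_inner_map_self (hT : ∀ i, T (b i) = (r i : 𝕜) • b i) {x : E} {a : ℝ}
    (ha : ∀ i, ⟪b i, x⟫_𝕜 ≠ 0 → a ≤ r i) :
    a * ‖x‖ ^ 2 ≤ RCLike.re ⟪x, T x⟫_𝕜 := by
  rw [b.re_inner_map_self_eq_sum hT, ← b.sum_sq_norm_inner_right, mul_sum]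
  refine sum_le_sum fun i _ => ?_
  by_cases hi : ⟪b i, x⟫_𝕜 = 0
  · simp [hi]
  · exact mul_le_mul_of_nonneg_right (ha i hi) (by positivity)

theorem re_inner_map_self_le (hT : ∀ i, T (b i) = (r i : 𝕜) • b i) {x : E} {a : ℝ}
    (ha : ∀ i, ⟪b i, x⟫_𝕜 ≠ 0 → r i ≤ a) :
    RCLike.re ⟪x, T x⟫_𝕜 ≤ a * ‖x‖ ^ 2 := by
  rw [b.re_inner_map_self_eq_sum hT, ← b.sum_sq_norm_inner_right, mul_sum]
  refine sum_le_sum fun i _ => ?_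
  by_cases hi : ⟪b i, x⟫_𝕜 = 0
  · simp [hi]
  · exact mul_le_mul_of_nonneg_right (ha i hi) (by positivity)

end OrthonormalBasis

namespace Submodule

variable (K : Submodule 𝕜 E) [K.HasOrthogonalProjection]

noncomputable def compression (T : E →ₗ[𝕜] E) : K →ₗ[𝕜] K :=
  K.orthogonalProjectionOnto.toLinearMap ∘ₗ T ∘ₗ K.subtype ∘ₗ
    K.orthogonalProjectionOnto.toLinearMap ∘ₗ K.subtype

theorem inner_compression_apply_self (T : E →ₗ[𝕜] E) (w : K) :
    ⟪w, K.compression T w⟫_𝕜 = ⟪(w : E), T w⟫_𝕜 := by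
  simp [compression]

end Submodule

end

theorem stmt_3_general {V : Type*} [NormedAddCommGroup V] [InnerProductSpace ℂ V]
    [FiniteDimensional ℂ V] {n m : ℕ} (hmn : m ≤ n)
    (F : V →ₗ[ℂ] V)
    (lam : Fin n → ℝ) (hlam : Monotone lam)
    (b : OrthonormalBasis (Fin n) ℂ V)
    (hb : ∀ i, F (b i) = (lam i : ℂ) • b i)
    (W : Submodule ℂ V)
    (mu : Fin m → ℝ) (hmu : Monotone mu)
    (c : OrthonormalBasis (Fin m) ℂ W)
    (hc : ∀ i, (W.orthogonalProjectionOnto.toLinearMap ∘ₗ F ∘ₗ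
      W.subtype ∘ₗ W.orthogonalProjectionOnto.toLinearMap ∘ₗ W.subtype) (c i)
        = (mu i : ℂ) • c i) :
    ∀ k : Fin m, lam (Fin.castLE hmn k) ≤ mu k := by
  intro k
  have hcV : Orthonormal ℂ fun j => (c j : V) := c.orthonormal.comp_linearIsometry W.subtypeₗᵢ
  obtain ⟨x, hx, hx0, hxb⟩ := exists_mem_span_image_ne_zero_forall_inner_eq_zero
    hcV.linearIndependent b (s := Iic k) (t := Iio (Fin.castLE hmn k)) (by simp)
  have hxW : x ∈ W := span_le.2 (by rintro _ ⟨j, -, rfl⟩; exact (c j).2) hx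
  have hlow : lam (Fin.castLE hmn k) * ‖x‖ ^ 2 ≤ RCLike.re ⟪x, F x⟫_ℂ :=
    b.le_re_inner_map_self hb fun i hi => hlam (not_lt.1 fun h => hi (hxb i (mem_Iio.2 h)))
  have hupp : RCLike.re ⟪⟨x, hxW⟩, W.compression F ⟨x, hxW⟩⟫_ℂ ≤ mu k * ‖x‖ ^ 2 :=
    c.re_inner_map_self_le hc fun j hj =>
      hmu (by_contra fun h => hj (hcV.inner_eq_zero_of_mem_span_image (by simpa using h) hx))
  rw [W.inner_compression_apply_self] at hupp
  exact le_of_mul_le_mul_right (hlow.trans hupp) (by positivity)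

/-- Cauchy interlacing / Rayleigh–Ritz.  If `F` is self-adjoint on `V`
with eigenvalues `lam : Fin n → ℝ` in non-decreasing order with multiplicity, `W` is
an `m`-dimensional subspace, and `mu : Fin m → ℝ` are the eigenvalues (non-decreasing,
with multiplicity) of the compression of `F` to `W`, then `lam k ≤ mu k` for all `k`. -/
theorem stmt_3 {V : Type*} [NormedAddCommGroup V] [InnerProductSpace ℂ V]
    [FiniteDimensional ℂ V] {n m : ℕ} (hmn : m ≤ n)
    (F : V →ₗ[ℂ] V) (hF : F.IsSymmetric)
    (lam : Fin n → ℝ) (hlam : Monotone lam)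
    (b : OrthonormalBasis (Fin n) ℂ V)
    (hb : ∀ i, F (b i) = (lam i : ℂ) • b i)
    (W : Submodule ℂ V)
    (mu : Fin m → ℝ) (hmu : Monotone mu)
    (c : OrthonormalBasis (Fin m) ℂ W)
    (hc : ∀ i, (W.orthogonalProjectionOnto.toLinearMap ∘ₗ F ∘ₗ
      W.subtype ∘ₗ W.orthogonalProjectionOnto.toLinearMap ∘ₗ W.subtype) (c i)
        = (mu i : ℂ) • c i) :
    ∀ k : Fin m, lam (Fin.castLE hmn k) ≤ mu k :=
  stmt_3_general hmn F lam hlam b hb W mu hmu c hc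
end

section
/- Main approximation theorem (finite-dimensional version): let F be a self-adjoint operator on a complex inner product space (possibly infinite-dimensional Hilbert space restricted to a finite-dimensional invariant setting), with m linearly independent eigenvectors x₁,…,xₘ for eigenvalues λ₁ ≤ … ≤ λₘ, equal to the m smallest eigenvalues of F counted with multiplicity. Suppose for each k a sequence x_{kn} with x_{kn} → x_k in norm and ⟨x_{sn}, F x_{qn}⟩ → ⟨x_s, F x_q⟩ for all 1 ≤ s,q ≤ m. Let 𝒱ₙ = span(x_{1n},…,x_{mn}) and let λ̂₁⁽ⁿ⁾ ≤ … ≤ λ̂ₘ⁽ⁿ⁾ be the eigenvalues of the compression of F to 𝒱ₙ (defined for n large enough that dim 𝒱ₙ = m). Then λ̂ₖ⁽ⁿ⁾ → λₖ for each k = 1,…,m. -/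
/-!
Write `R(w) = re ⟪w, F w⟫ / ‖w‖²` and `μ_k = λ̂ₖ⁽ⁿ⁾`.

Lower bound (Cauchy interlacing): the span of the first `k + 1` eigenvectors of the compression
and the span of the eigenvectors of `F` for `λ_k, …, λ_{N-1}` have dimensions adding up to
`N + 1`, so they share a nonzero vector `w`, and `λ_k ≤ R(w) ≤ μ_k`.

Upper bound (min–max): for the same reason `𝒱ₙ` contains a nonzero `w = ∑_{j ≤ k} a_j y_{nj}`
in the span of the compression eigenvectors for `μ_k, …, μ_{m-1}`, so `μ_k ≤ R(w)`, while
`u = ∑_{j ≤ k} a_j x_j` has `R(u) ≤ λ_k`. The quadratic forms `a ↦ ⟪w, F w⟫` and `a ↦ ‖w‖²`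
converge to those of `u` uniformly on `{|a| = 1}`, and `‖u‖² ≥ δ |a|²` by linear independence of
the `x_j`, hence `μ_k ≤ λ_k + o(1)`.
-/

open Filter Topology Finset
open scoped InnerProductSpace ComplexConjugate

lemma eventually_lt_of_rayleigh_approx {α β : Type*} {l : Filter β} {Q G ν : α → ℝ}
    {Qn Gn : β → α → ℝ} {μ : β → ℝ} {t t' δ : ℝ} (htt' : t < t') (hδ : 0 < δ)
    (hQ : ∀ a, Q a ≤ t * G a) (hG : ∀ a, δ * ν a ≤ G a)
    (hQn : ∀ η > 0, ∀ᶠ n in l, ∀ a, |Qn n a - Q a| ≤ η * ν a)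
    (hGn : ∀ η > 0, ∀ᶠ n in l, ∀ a, |Gn n a - G a| ≤ η * ν a)
    (hμ : ∀ᶠ n in l, ∃ a, 0 < ν a ∧ μ n * Gn n a ≤ Qn n a) :
    ∀ᶠ n in l, μ n < t' := by
  set η := min (δ / 2) ((t' - t) * δ / (4 * (|t| + 1)))
  have hη : 0 < η := lt_min (by positivity) (div_pos (mul_pos (by linarith) hδ) (by positivity))
  filter_upwards [hQn η hη, hGn η hη, hμ] with n hQn hGn ⟨a, hν, ha⟩
  by_contra! hμt
  obtain ⟨-, hQa⟩ := abs_le.1 (hQn a)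
  have hηδ : η * ν a ≤ δ / 2 * ν a := mul_le_mul_of_nonneg_right (min_le_left _ _) hν.le
  have hηt : (|t| + 1) * (η * ν a) ≤ (t' - t) * δ / 4 * ν a := by
    have : (|t| + 1) * η ≤ (t' - t) * δ / 4 := by
      rw [← le_div_iff₀' (by positivity), div_div]
      exact min_le_right _ _
    nlinarith
  have hGpos : δ / 2 * ν a ≤ Gn n a := by linarith [hG a, (abs_le.1 (hGn a)).1]
  have htG : t * G a ≤ t * Gn n a + |t| * (η * ν a) := by
    have := (le_abs_self (t * (G a - Gn n a))).trans_eq (abs_mul _ _)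
    rw [abs_sub_comm] at this
    nlinarith [mul_le_mul_of_nonneg_left (hGn a) (abs_nonneg t)]
  have hdiff : (μ n - t) * Gn n a ≤ (|t| + 1) * (η * ν a) := by nlinarith [hQ a]
  nlinarith [mul_le_mul (sub_le_sub_right hμt t) hGpos (by positivity) (by linarith),
    mul_pos (mul_pos (sub_pos.2 htt') hδ) hν]

section

variable {𝕜 E ι : Type*} [RCLike 𝕜] [NormedAddCommGroup E] [InnerProductSpace 𝕜 E]

lemma inner_sum_smul_map_sum_smul (T : E →ₗ[𝕜] E) (p : ι → E) (a : ι → 𝕜) (s : Finset ι) :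
    ⟪∑ i ∈ s, a i • p i, T (∑ j ∈ s, a j • p j)⟫_𝕜 =
      ∑ i ∈ s, ∑ j ∈ s, conj (a i) * a j * ⟪p i, T (p j)⟫_𝕜 := by
  rw [sum_inner]
  refine sum_congr rfl fun i _ => ?_
  rw [inner_smul_left, map_sum, inner_sum, mul_sum]
  refine sum_congr rfl fun j _ => ?_
  rw [map_smul, inner_smul_right, mul_assoc]

lemma re_inner_sum_smul_map_sum_smul_of_orthonormal {e : ι → E} (he : Orthonormal 𝕜 e)
    {T : E →ₗ[𝕜] E} {r : ι → ℝ} (hT : ∀ i j, ⟪e i, T (e j)⟫_𝕜 = r j * ⟪e i, e j⟫_𝕜)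
    (a : ι → 𝕜) (s : Finset ι) :
    RCLike.re ⟪∑ i ∈ s, a i • e i, T (∑ j ∈ s, a j • e j)⟫_𝕜 = ∑ i ∈ s, r i * ‖a i‖ ^ 2 := by
  classical
  rw [inner_sum_smul_map_sum_smul]
  simp only [hT, orthonormal_iff_ite.1 he, mul_ite, mul_one, mul_zero, sum_ite_eq, map_sum]
  refine sum_congr rfl fun i hi => ?_
  rw [if_pos hi, RCLike.conj_mul, mul_comm, ← RCLike.ofReal_pow, ← RCLike.ofReal_mul,
    RCLike.ofReal_re]

lemma norm_sum_smul_sq_of_orthonormal {e : ι → E} (he : Orthonormal 𝕜 e) (a : ι → 𝕜)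
    (s : Finset ι) : ‖∑ i ∈ s, a i • e i‖ ^ 2 = ∑ i ∈ s, ‖a i‖ ^ 2 := by
  simpa [inner_self_eq_norm_sq] using
    re_inner_sum_smul_map_sum_smul_of_orthonormal he (T := LinearMap.id) (r := 1)
      (fun i j => by simp) a s

lemma re_inner_map_le_of_mem_span {e : ι → E} (he : Orthonormal 𝕜 e)
    {T : E →ₗ[𝕜] E} {r : ι → ℝ} (hT : ∀ i j, ⟪e i, T (e j)⟫_𝕜 = r j * ⟪e i, e j⟫_𝕜)
    {s : Set ι} {t : ℝ} (hs : ∀ i ∈ s, r i ≤ t) {v : E} (hv : v ∈ Submodule.span 𝕜 (e '' s)) :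
    RCLike.re ⟪v, T v⟫_𝕜 ≤ t * ‖v‖ ^ 2 := by
  obtain ⟨l, hl, rfl⟩ := (Finsupp.mem_span_image_iff_linearCombination 𝕜).1 hv
  rw [Finsupp.linearCombination_apply, Finsupp.sum,
    re_inner_sum_smul_map_sum_smul_of_orthonormal he hT, norm_sum_smul_sq_of_orthonormal he,
    mul_sum]
  exact sum_le_sum fun i hi => mul_le_mul_of_nonneg_right (hs i (hl hi)) (by positivity)

lemma le_re_inner_map_of_mem_span {e : ι → E} (he : Orthonormal 𝕜 e)
    {T : E →ₗ[𝕜] E} {r : ι → ℝ} (hT : ∀ i j, ⟪e i, T (e j)⟫_𝕜 = r j * ⟪e i, e j⟫_𝕜)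
    {s : Set ι} {t : ℝ} (hs : ∀ i ∈ s, t ≤ r i) {v : E} (hv : v ∈ Submodule.span 𝕜 (e '' s)) :
    t * ‖v‖ ^ 2 ≤ RCLike.re ⟪v, T v⟫_𝕜 := by
  have := re_inner_map_le_of_mem_span he (T := -T) (r := -r) (fun i j => by simp [hT])
    (fun i hi => neg_le_neg (hs i hi)) hv
  simp only [LinearMap.neg_apply, inner_neg_right, map_neg, neg_mul] at this
  linarith

lemma finrank_span_image_finset {v : ι → E} (hv : LinearIndependent 𝕜 v) (s : Finset ι) :
    Module.finrank 𝕜 (Submodule.span 𝕜 (v '' s)) = #s := by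
  have := finrank_span_eq_card (hv.comp ((↑) : s → ι) Subtype.val_injective)
  rwa [Set.range_comp, Subtype.range_coe_subtype, Fintype.card_coe] at this

lemma exists_ne_zero_mem_of_finrank_lt [FiniteDimensional 𝕜 E] {W₁ W₂ V : Submodule 𝕜 E}
    (h₁ : W₁ ≤ V) (h₂ : W₂ ≤ V)
    (h : Module.finrank 𝕜 V < Module.finrank 𝕜 W₁ + Module.finrank 𝕜 W₂) :
    ∃ w ∈ W₁, w ∈ W₂ ∧ w ≠ 0 := by
  by_contra! hdisj
  have hbot : W₁ ⊓ W₂ = ⊥ := (Submodule.eq_bot_iff _).2 fun w hw => hdisj w hw.1 hw.2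
  have := Submodule.finrank_sup_add_finrank_inf_eq W₁ W₂
  rw [hbot, finrank_bot, add_zero] at this
  have := Submodule.finrank_mono (sup_le h₁ h₂)
  omega

/-- The paper's `P_V ∘ F ∘ P_V` restricted to `V`. -/
noncomputable def compression (F : E →ₗ[𝕜] E) (V : Submodule 𝕜 E) [V.HasOrthogonalProjection] :
    V →ₗ[𝕜] V :=
  V.orthogonalProjectionOnto.toLinearMap ∘ₗ F ∘ₗ V.subtype ∘ₗ
    V.orthogonalProjectionOnto.toLinearMap ∘ₗ V.subtype

lemma inner_compression_apply (F : E →ₗ[𝕜] E) (V : Submodule 𝕜 E) [V.HasOrthogonalProjection]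
    (v w : V) : ⟪v, compression F V w⟫_𝕜 = ⟪(v : E), F w⟫_𝕜 := by
  simp only [compression, LinearMap.comp_apply, Submodule.subtype_apply,
    ContinuousLinearMap.coe_coe, Submodule.orthogonalProjectionOnto_mem_subspace_eq_self]
  exact Submodule.inner_orthogonalProjectionOnto_eq_of_mem_left _ _

lemma inner_map_coe_of_compression_eq_smul {ι : Type*} {F : E →ₗ[𝕜] E} {V : Submodule 𝕜 E}
    [V.HasOrthogonalProjection] {c : ι → V} {r : ι → ℝ}
    (hc : ∀ i, compression F V (c i) = (r i : 𝕜) • c i) (i j : ι) :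
    ⟪(c i : E), F (c j)⟫_𝕜 = r j * ⟪(c i : E), (c j : E)⟫_𝕜 := by
  rw [← inner_compression_apply, hc, inner_smul_right, Submodule.coe_inner]

lemma mem_span_image_of_apply_eq_smul [Fintype ι] {F : E →ₗ[𝕜] E} (hF : F.IsSymmetric)
    {b : OrthonormalBasis ι 𝕜 E} {Lam : ι → ℝ} (hb : ∀ i, F (b i) = (Lam i : 𝕜) • b i)
    {μ : ℝ} {v : E} (hv : F v = (μ : 𝕜) • v) : v ∈ Submodule.span 𝕜 (b '' {i | Lam i = μ}) := by
  rw [← b.sum_repr' v]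
  refine Submodule.sum_mem _ fun i _ => ?_
  by_cases hi : Lam i = μ
  · exact Submodule.smul_mem _ _ (Submodule.subset_span ⟨i, hi, rfl⟩)
  · have hne : (Lam i : 𝕜) ≠ μ := by exact_mod_cast hi
    have : ⟪b i, v⟫_𝕜 = 0 := hF.orthogonalFamily_eigenspaces hne
      ⟨b i, Module.End.mem_eigenspace_iff.2 (hb i)⟩ ⟨v, Module.End.mem_eigenspace_iff.2 hv⟩
    rw [this, zero_smul]
    exact Submodule.zero_mem _

lemma re_inner_map_sum_smul_le [Fintype ι] {κ : Type*} [Fintype κ] {F : E →ₗ[𝕜] E}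
    (hF : F.IsSymmetric) {b : OrthonormalBasis ι 𝕜 E} {Lam : ι → ℝ}
    (hb : ∀ i, F (b i) = (Lam i : 𝕜) • b i) {x : κ → E} {lam : κ → ℝ} (hx : ∀ j, F (x j) = (lam j : 𝕜) • x j) {t : ℝ}
    (ht : ∀ j, lam j ≤ t) (a : κ → 𝕜) :
    RCLike.re ⟪∑ j, a j • x j, F (∑ j, a j • x j)⟫_𝕜 ≤ t * ‖∑ j, a j • x j‖ ^ 2 := by
  refine re_inner_map_le_of_mem_span b.orthonormal (s := {i | Lam i ≤ t})
    (fun i j => by rw [hb, inner_smul_right]) (fun i hi => hi) ?_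
  refine Submodule.sum_mem _ fun j _ => Submodule.smul_mem _ _ ?_
  refine Submodule.span_mono (Set.image_mono fun i hi => ?_)
    (mem_span_image_of_apply_eq_smul hF hb (hx j))
  exact (Set.mem_ofPred.1 hi).trans_le (ht j)

lemma LinearIndependent.exists_pos_mul_sum_norm_sq_le [Fintype ι] {x : ι → E}
    (hx : LinearIndependent 𝕜 x) :
    ∃ δ > 0, ∀ a : ι → 𝕜, δ * ∑ i, ‖a i‖ ^ 2 ≤ ‖∑ i, a i • x i‖ ^ 2 := by
  let f : EuclideanSpace 𝕜 ι →ₗ[𝕜] E :=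
    Fintype.linearCombination 𝕜 x ∘ₗ (WithLp.linearEquiv 2 𝕜 (ι → 𝕜)).toLinearMap
  have hf : LinearMap.ker f = ⊥ := LinearMap.ker_eq_bot.2 <|
    hx.fintypeLinearCombination_injective.comp (WithLp.linearEquiv 2 𝕜 (ι → 𝕜)).injective
  obtain ⟨K, -, hK⟩ := f.exists_antilipschitzWith hf
  obtain ⟨c, hc, hcf⟩ := antilipschitzWith_iff_exists_mul_le_norm.1 ⟨K, hK⟩
  refine ⟨c ^ 2, by positivity, fun a => ?_⟩
  have := pow_le_pow_left₀ (by positivity) (hcf (WithLp.toLp 2 a)) 2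
  rwa [mul_pow, EuclideanSpace.norm_sq_eq] at this

lemma eventually_abs_re_inner_map_sum_smul_sub_le [Fintype ι] {α : Type*} {l : Filter α}
    (T : E →ₗ[𝕜] E) {p : α → ι → E} {q : ι → E}
    (h : ∀ i j, Tendsto (fun n => ⟪p n i, T (p n j)⟫_𝕜) l (𝓝 ⟪q i, T (q j)⟫_𝕜))
    {η : ℝ} (hη : 0 < η) :
    ∀ᶠ n in l, ∀ a : ι → 𝕜,
      |RCLike.re ⟪∑ i, a i • p n i, T (∑ i, a i • p n i)⟫_𝕜 -
        RCLike.re ⟪∑ i, a i • q i, T (∑ i, a i • q i)⟫_𝕜| ≤ η * ∑ i, ‖a i‖ ^ 2 := by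
  set ε := η / (Fintype.card ι + 1)
  have hε : 0 < ε := by positivity
  have hclose : ∀ᶠ n in l, ∀ i j, ‖⟪p n i, T (p n j)⟫_𝕜 - ⟪q i, T (q j)⟫_𝕜‖ ≤ ε := by
    simp only [eventually_all]
    intro i j
    filter_upwards [Metric.tendsto_nhds.1 (h i j) ε hε] with n hn
    rw [dist_eq_norm] at hn
    exact hn.le
  filter_upwards [hclose] with n hn a
  rw [← map_sub, inner_sum_smul_map_sum_smul, inner_sum_smul_map_sum_smul]
  simp only [← sum_sub_distrib, ← mul_sub]
  calc _ ≤ ‖∑ i, ∑ j, conj (a i) * a j *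
          (⟪p n i, T (p n j)⟫_𝕜 - ⟪q i, T (q j)⟫_𝕜)‖ := RCLike.abs_re_le_norm _
    _ ≤ ∑ i, ∑ j, ‖a i‖ * ‖a j‖ * ε := by
        refine norm_sum_le_of_le _ fun i _ => norm_sum_le_of_le _ fun j _ => ?_
        rw [norm_mul, norm_mul, RCLike.norm_conj]
        exact mul_le_mul_of_nonneg_left (hn i j) (by positivity)
    _ = ε * (∑ i, ‖a i‖) ^ 2 := by
        rw [sq, sum_mul_sum, mul_sum]
        exact sum_congr rfl fun i _ => by rw [mul_sum]; exact sum_congr rfl fun j _ => by ring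
    _ ≤ ε * (Fintype.card ι * ∑ i, ‖a i‖ ^ 2) := by
        gcongr; exact sq_sum_le_card_mul_sum_sq
    _ ≤ η * ∑ i, ‖a i‖ ^ 2 := by
        rw [← mul_assoc]
        gcongr
        rw [div_mul_eq_mul_div, div_le_iff₀ (by positivity)]
        nlinarith

theorem le_compression_eigenvalue [FiniteDimensional 𝕜 E] {N m : ℕ} (hmN : m ≤ N)
    {F : E →ₗ[𝕜] E} {Lam : Fin N → ℝ} (hLam : Monotone Lam) {b : OrthonormalBasis (Fin N) 𝕜 E}
    (hb : ∀ i, F (b i) = (Lam i : 𝕜) • b i) {V : Submodule 𝕜 E}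
    {c : OrthonormalBasis (Fin m) 𝕜 V}
    {mu : Fin m → ℝ} (hmu : Monotone mu) (hc : ∀ i, compression F V (c i) = (mu i : 𝕜) • c i)
    (k : Fin m) : Lam (Fin.castLE hmN k) ≤ mu k := by
  have hc' : Orthonormal 𝕜 fun i => (c i : E) := c.orthonormal.comp_linearIsometry V.subtypeₗᵢ
  obtain ⟨w, hw₁, hw₂, hw0⟩ := exists_ne_zero_mem_of_finrank_lt (V := ⊤)
    (W₁ := Submodule.span 𝕜 ((fun i => (c i : E)) '' Iic k))
    (W₂ := Submodule.span 𝕜 (b '' Ici (Fin.castLE hmN k))) le_top le_top <| by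
      rw [finrank_top, finrank_span_image_finset hc'.linearIndependent,
        finrank_span_image_finset b.orthonormal.linearIndependent, Fin.card_Iic, Fin.card_Ici,
        Module.finrank_eq_card_basis b.toBasis, Fintype.card_fin, Fin.val_castLE]
      omega
  have hupper := re_inner_map_le_of_mem_span hc' (inner_map_coe_of_compression_eq_smul hc)
    (fun i hi => hmu (mem_Iic.1 hi)) hw₁
  have hlower := le_re_inner_map_of_mem_span b.orthonormal
    (fun i j => by rw [hb, inner_smul_right]) (fun i hi => hLam (mem_Ici.1 hi)) hw₂
  exact le_of_mul_le_mul_right (hlower.trans hupper) (by positivity)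

theorem exists_mul_norm_sq_le_re_inner_of_compression [FiniteDimensional 𝕜 E] {m : ℕ}
    {F : E →ₗ[𝕜] E} {y : Fin m → E}
    {c : OrthonormalBasis (Fin m) 𝕜 (Submodule.span 𝕜 (Set.range y))} {mu : Fin m → ℝ}
    (hmu : Monotone mu)
    (hc : ∀ i, compression F (Submodule.span 𝕜 (Set.range y)) (c i) = (mu i : 𝕜) • c i)
    (k : Fin m) :
    ∃ a : Iic k → 𝕜, 0 < ∑ j, ‖a j‖ ^ 2 ∧
      mu k * ‖∑ j, a j • y j‖ ^ 2 ≤ RCLike.re ⟪∑ j, a j • y j, F (∑ j, a j • y j)⟫_𝕜 := by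
  have hc' : Orthonormal 𝕜 fun i => (c i : E) :=
    c.orthonormal.comp_linearIsometry (Submodule.span 𝕜 (Set.range y)).subtypeₗᵢ
  have hV : Module.finrank 𝕜 (Submodule.span 𝕜 (Set.range y)) = m := by
    rw [Module.finrank_eq_card_basis c.toBasis, Fintype.card_fin]
  have hy : LinearIndependent 𝕜 y := by
    rw [linearIndependent_iff_card_eq_finrank_span, Fintype.card_fin, Set.finrank, hV]
  obtain ⟨w, hw₁, hw₂, hw0⟩ := exists_ne_zero_mem_of_finrank_lt
    (W₁ := Submodule.span 𝕜 ((fun i => (c i : E)) '' Ici k))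
    (W₂ := Submodule.span 𝕜 (y '' Iic k))
    (Submodule.span_le.2 <| by rintro _ ⟨i, -, rfl⟩; exact (c i).2)
    (Submodule.span_mono (Set.image_subset_range _ _)) <| by
      rw [hV, finrank_span_image_finset hc'.linearIndependent, finrank_span_image_finset hy,
        Fin.card_Iic, Fin.card_Ici]
      omega
  obtain ⟨a, rfl⟩ := (Fintype.mem_span_image_iff_exists_fun 𝕜).1 hw₂
  refine ⟨a, ?_, le_re_inner_map_of_mem_span hc' (inner_map_coe_of_compression_eq_smul hc)
    (fun i hi => hmu (mem_Ici.1 hi)) hw₁⟩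
  obtain ⟨j, hj⟩ : ∃ j, a j ≠ 0 := by
    by_contra! h
    simp [h] at hw0
  exact sum_pos' (fun _ _ => by positivity) ⟨j, mem_univ _, by positivity⟩

end

/-- Main approximation theorem (finite-dimensional version).
`F` is self-adjoint on a finite-dimensional complex inner product space `H` with
full list of eigenvalues `Lam : Fin N → ℝ` in non-decreasing order with
multiplicity (orthonormal eigenbasis `b`); `x 0, …, x (m-1)` are linearly
independent eigenvectors for the `m` smallest eigenvalues
`lam k = Lam k`, `k < m ≤ N`.  For each `k` a sequence `y n k → x k` in norm with
`⟨y n s, F (y n q)⟩ → ⟨x s, F (x q)⟩` for all `s, q`.  If, eventually in `n`,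
`mu n : Fin m → ℝ` lists (non-decreasingly, via an orthonormal eigenbasis of the
compression) the eigenvalues of the compression of `F` to
`𝒱ₙ = span(y n 0, …, y n (m-1))`, then `mu n k → lam k` for each `k`. -/
theorem stmt_15 {H : Type*} [NormedAddCommGroup H] [InnerProductSpace ℂ H]
    [FiniteDimensional ℂ H] {N m : ℕ} (hmN : m ≤ N)
    (F : H →ₗ[ℂ] H) (hF : F.IsSymmetric)
    (Lam : Fin N → ℝ) (hLam : Monotone Lam)
    (b : OrthonormalBasis (Fin N) ℂ H)
    (hb : ∀ i, F (b i) = (Lam i : ℂ) • b i)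
    (lam : Fin m → ℝ) (hlam : ∀ k : Fin m, lam k = Lam (Fin.castLE hmN k))
    (x : Fin m → H) (hxli : LinearIndependent ℂ x)
    (hxeig : ∀ k, F (x k) = (lam k : ℂ) • x k)
    (y : ℕ → Fin m → H)
    (hyconv : ∀ k, Tendsto (fun n => y n k) atTop (𝓝 (x k)))
    (hqconv : ∀ s q, Tendsto (fun n => ⟪y n s, F (y n q)⟫_ℂ) atTop
      (𝓝 ⟪x s, F (x q)⟫_ℂ))
    (mu : ℕ → Fin m → ℝ)
    (hmu : ∀ᶠ n in atTop,
      Monotone (mu n) ∧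
        ∃ c : OrthonormalBasis (Fin m) ℂ (Submodule.span ℂ (Set.range (y n))),
          ∀ i,
            ((Submodule.orthogonalProjectionOnto (Submodule.span ℂ (Set.range (y n)))).toLinearMap ∘ₗ
              F ∘ₗ (Submodule.span ℂ (Set.range (y n))).subtype ∘ₗ
              (Submodule.orthogonalProjectionOnto (Submodule.span ℂ (Set.range (y n)))).toLinearMap ∘ₗ
              (Submodule.span ℂ (Set.range (y n))).subtype) (c i) = (mu n i : ℂ) • c i) :
    ∀ k, Tendsto (fun n => mu n k) atTop (𝓝 (lam k)) := by
  intro k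
  refine tendsto_order.2 ⟨fun t ht => ?_, fun t ht => ?_⟩
  · filter_upwards [hmu] with n ⟨hmon, c, hc⟩
    exact ht.trans_le (hlam k ▸ le_compression_eigenvalue hmN hLam hb hmon hc k)
  have hlam_mono : Monotone lam := fun i j hij => by
    rw [hlam, hlam]
    exact hLam hij
  obtain ⟨δ, hδ, hx⟩ :=
    (hxli.comp ((↑) : Iic k → Fin m) Subtype.val_injective).exists_pos_mul_sum_norm_sq_le
  have hgram : ∀ η > 0, ∀ᶠ n in atTop, ∀ a : Iic k → ℂ,
      |‖∑ j, a j • y n j‖ ^ 2 - ‖∑ j, a j • x j‖ ^ 2| ≤ η * ∑ j, ‖a j‖ ^ 2 := fun η hη => by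
    simpa only [LinearMap.id_apply, inner_self_eq_norm_sq] using
      eventually_abs_re_inner_map_sum_smul_sub_le LinearMap.id
        (fun i j : Iic k => (hyconv i).inner (hyconv j)) hη
  exact eventually_lt_of_rayleigh_approx ht hδ
    (fun a => re_inner_map_sum_smul_le hF hb (fun j : Iic k => hxeig j)
      (fun j => hlam_mono (mem_Iic.1 j.2)) a) hx
    (fun η => eventually_abs_re_inner_map_sum_smul_sub_le F fun i j : Iic k => hqconv i j) hgram
    (hmu.mono fun n ⟨hmon, c, hc⟩ => exists_mul_norm_sq_le_re_inner_of_compression hmon hc k)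
end
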